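/- arXiv:2112.04433 — 2 statements merged into one kernel-verified Lean document; each statement's English description precedes it below -/
import Mathlib

section
/- Let s11, s12, s21, u, v, t be real numbers, each equal to 1 or -1, and let k be a natural number. Then the conjunction (s12*s21*u*v > 0 and (-s21)^(k+1)*s12^k*s11*t*v > 0) holds if and only if the conjunction (s21*s12*v*u > 0 and (-s12)^(k+1)*s21^k*s11*t*u > 0) holds. (This is the case i, j ∈ {1,3} of the comparison, in Proposition 4.3, of the real lifting conditions of a shape (C) bitangent class for the edge-length case λ1 < λ2 ≤ λ3 with those for λ2 < λ1 ≤ λ3; here u = s_{0i}, v = s_{j0}, t = s_{k,4-k}.) -/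
/-!
Both sides share the condition `s₁₂ s₂₁ u v > 0`, and the two remaining products differ
only in their last factors: they are `c · (s₂₁ v)` and `c · (s₁₂ u)` with
`c = (-1)^(k+1) (s₁₂ s₂₁)^k s₁₁ t`. Under the shared condition `s₂₁ v` and `s₁₂ u` have
positive product, hence the same sign, so `c · (s₂₁ v)` and `c · (s₁₂ u)` are positive
together.
-/

theorem mul_pos_iff_of_mul_pos {α : Type*} [CommRing α] [LinearOrder α] [IsStrictOrderedRing α]
    {x y : α} (hxy : 0 < x * y) (c : α) : 0 < c * x ↔ 0 < c * y := by
  have hx : 0 < x * x := mul_self_pos.mpr (left_ne_zero_of_mul hxy.ne')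
  calc 0 < c * x ↔ 0 < c * x * (x * y) := (mul_pos_iff_of_pos_right hxy).symm
    _ ↔ 0 < c * y * (x * x) := by rw [show c * x * (x * y) = c * y * (x * x) by ring]
    _ ↔ 0 < c * y := mul_pos_iff_of_pos_right hx

theorem shapeC_case_i_j_odd_general (s11 s12 s21 u v t : ℝ) (k : ℕ) :
    (s12 * s21 * u * v > 0 ∧ (-s21) ^ (k + 1) * s12 ^ k * s11 * t * v > 0) ↔
      (s21 * s12 * v * u > 0 ∧ (-s12) ^ (k + 1) * s21 ^ k * s11 * t * u > 0) := by
  set c := (-1) ^ (k + 1) * (s12 * s21) ^ k * s11 * t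
  have hleft : (-s21) ^ (k + 1) * s12 ^ k * s11 * t * v = c * (s21 * v) := by ring
  have hright : (-s12) ^ (k + 1) * s21 ^ k * s11 * t * u = c * (s12 * u) := by ring
  have hshared : s21 * s12 * v * u = s12 * s21 * u * v := by ring
  rw [hleft, hright, hshared]
  refine and_congr_right fun h => mul_pos_iff_of_mul_pos ?_ c
  linarith [show s21 * v * (s12 * u) = s12 * s21 * u * v by ring]

/-- Case `i, j ∈ {1,3}` of the comparison in Proposition 4.3: the real lifting
conditions of a shape (C) bitangent class for `λ₁ < λ₂ ≤ λ₃` are equivalent to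
those for `λ₂ < λ₁ ≤ λ₃`. Here `u = s_{0i}`, `v = s_{j0}`, `t = s_{k,4-k}`,
and all quantities are signs, i.e. `±1`. -/
theorem shapeC_case_i_j_odd (s11 s12 s21 u v t : ℝ)
    (h11 : s11 = 1 ∨ s11 = -1) (h12 : s12 = 1 ∨ s12 = -1)
    (h21 : s21 = 1 ∨ s21 = -1) (hu : u = 1 ∨ u = -1)
    (hv : v = 1 ∨ v = -1) (ht : t = 1 ∨ t = -1) (k : ℕ) :
    (s12 * s21 * u * v > 0 ∧ (-s21) ^ (k + 1) * s12 ^ k * s11 * t * v > 0) ↔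
      (s21 * s12 * v * u > 0 ∧ (-s12) ^ (k + 1) * s21 ^ k * s11 * t * u > 0) :=
  shapeC_case_i_j_odd_general s11 s12 s21 u v t k
end

section
/- Let s02, s11, s12, s21, v, t be real numbers, each equal to 1 or -1, and let k be a natural number. Then the conjunction (-s11*s21*s02*v > 0 and (-s21)^(k+1)*s12^k*s11*t*v > 0) holds if and only if the conjunction (-s11*s21*v*s02 > 0 and (-s21*s12)^k*t*s02 > 0) holds. (This is the case j ∈ {1,3}, i = 2 of the comparison, in Proposition 4.3, of the real lifting conditions of a shape (C) bitangent class for λ1 < λ2 ≤ λ3 with those for λ2 < λ1 ≤ λ3; here v = s_{j0}, t = s_{k,4-k}.) -/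
/-! Write `A = -s11 s21 s02 v`, `B = (-s21)^(k+1) s12^k s11 t v` and `C = (-s21 s12)^k t s02`.
The ring identity `B · s02² = A · C` holds, and `A > 0` forces `s02 ≠ 0`; so under `A > 0`
both `B` and `C` have the sign of `A · C`. -/

theorem pos_iff_pos_of_mul_sq_eq_mul {R : Type*} [CommRing R] [LinearOrder R]
    [IsStrictOrderedRing R] {a b c d : R} (hd : d ≠ 0) (h : b * d ^ 2 = a * c) (ha : 0 < a) :
    0 < b ↔ 0 < c := by
  rw [← mul_pos_iff_of_pos_right (sq_pos_of_ne_zero hd), h, mul_pos_iff_of_pos_left ha]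

theorem shapeC_case_j_odd_i_two_general (s02 s11 s12 s21 v t : ℝ) (k : ℕ) :
    (-s11 * s21 * s02 * v > 0 ∧ (-s21) ^ (k + 1) * s12 ^ k * s11 * t * v > 0) ↔
      (-s11 * s21 * v * s02 > 0 ∧ (-s21 * s12) ^ k * t * s02 > 0) := by
  rw [show -s11 * s21 * v * s02 = -s11 * s21 * s02 * v by ring]
  refine and_congr_right fun hA => ?_
  have hs02 : s02 ≠ 0 := by
    rintro rfl
    simp at hA
  exact pos_iff_pos_of_mul_sq_eq_mul hs02 (by ring) hA

/-- Case `j ∈ {1,3}`, `i = 2` of the comparison in Proposition 4.3: the real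
lifting conditions of a shape (C) bitangent class for `λ₁ < λ₂ ≤ λ₃` are
equivalent to those for `λ₂ < λ₁ ≤ λ₃`. Here `v = s_{j0}`, `t = s_{k,4-k}`,
and all quantities are signs, i.e. `±1`. -/
theorem shapeC_case_j_odd_i_two (s02 s11 s12 s21 v t : ℝ)
    (h02 : s02 = 1 ∨ s02 = -1) (h11 : s11 = 1 ∨ s11 = -1)
    (h12 : s12 = 1 ∨ s12 = -1) (h21 : s21 = 1 ∨ s21 = -1)
    (hv : v = 1 ∨ v = -1) (ht : t = 1 ∨ t = -1) (k : ℕ) :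
    (-s11 * s21 * s02 * v > 0 ∧ (-s21) ^ (k + 1) * s12 ^ k * s11 * t * v > 0) ↔
      (-s11 * s21 * v * s02 > 0 ∧ (-s21 * s12) ^ k * t * s02 > 0) :=
  shapeC_case_j_odd_i_two_general s02 s11 s12 s21 v t k
end
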